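/- arXiv:2102.06751 — 6 statements merged into one kernel-verified Lean document; each statement's English description precedes it below -/
import Mathlib

section
/- Let β ≥ 0 and ν ≥ 0 be real, and let ϑ be a real number with ϑ > G_{β,ν+1}(0). Then the eigenvalue equation ϑλ + G_{β,ν}(λ) = 0 has no solution λ in the closed right half plane; that is, for every complex λ with Re(λ) ≥ 0 one has ϑλ + G_{β,ν}(λ) ≠ 0. (Hence the constant-flux steady state of the limit model is linearly stable whenever the removal parameter η satisfies η > (G_{β,ν+1}(0)/G_{β,ν}(0))^{β+1}.) -/
/-!
Write `W_ν = G_{β,ν}(0) > 0`. Since `|e^{-λz} - 1| ≤ |λ| z` for `Re λ ≥ 0` and `z ≥ 0`,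
`|G_{β,ν}(λ) - W_ν| ≤ |λ| W_{ν+1}`. At a root, `G_{β,ν}(λ) - W_ν = -(ϑλ + W_ν)`, so
`|ϑλ + W_ν| ≤ |λ| W_{ν+1} ≤ ϑ|λ|`; but `Re (ϑλ) ≥ 0` gives `|ϑλ + W_ν|² ≥ ϑ²|λ|² + W_ν²`,
contradicting `W_ν > 0`.
-/

/-- The characteristic function `G_{β,ν}(λ) = ∫₀^∞ z^ν exp(−z^{β+1}/(β+1)) e^{−λz} dz`
of the linearized Becker–Döring bubblelator limit model. -/
noncomputable def G (β ν : ℝ) (l : ℂ) : ℂ :=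
  ∫ z in Set.Ioi (0 : ℝ),
    ((z ^ ν * Real.exp (-z ^ (β + 1) / (β + 1)) : ℝ) : ℂ) * Complex.exp (-l * (z : ℂ))

open MeasureTheory Set

theorem Complex.norm_exp_sub_one_le_norm_of_re_nonpos {w : ℂ} (hw : w.re ≤ 0) :
    ‖exp w - 1‖ ≤ ‖w‖ := by
  have hderiv : ∀ t ∈ Icc (0 : ℝ) 1,
      HasDerivWithinAt (fun t : ℝ => exp (t * w)) (exp (t * w) * w) (Icc 0 1) t := fun t _ =>
    ((hasDerivAt_id (t : ℂ)).comp_ofReal.mul_const w |>.congr_deriv (one_mul w)).cexp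
      |>.hasDerivWithinAt
  have hbound : ∀ t ∈ Ico (0 : ℝ) 1, ‖exp (t * w) * w‖ ≤ ‖w‖ := fun t ht => by
    rw [norm_mul, norm_exp, re_ofReal_mul]
    exact mul_le_of_le_one_left (norm_nonneg w)
      (Real.exp_le_one_iff.mpr (mul_nonpos_of_nonneg_of_nonpos ht.1 hw))
  simpa using norm_image_sub_le_of_norm_deriv_le_segment_01' hderiv hbound

theorem Complex.sq_norm_add_sq_le_sq_norm_add_ofReal {a : ℂ} (ha : 0 ≤ a.re) {r : ℝ}
    (hr : 0 ≤ r) : ‖a‖ ^ 2 + r ^ 2 ≤ ‖a + r‖ ^ 2 := by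
  simp only [Complex.sq_norm, normSq_apply, add_re, add_im, ofReal_re, ofReal_im, add_zero]
  nlinarith [mul_nonneg ha hr]

namespace BeckerDoring

noncomputable def weight (β ν z : ℝ) : ℝ := z ^ ν * Real.exp (-z ^ (β + 1) / (β + 1))

variable {β ν : ℝ}

theorem weight_pos {z : ℝ} (hz : 0 < z) : 0 < weight β ν z := by
  unfold weight; positivity

theorem weight_add_one {z : ℝ} (hz : 0 < z) : weight β (ν + 1) z = z * weight β ν z := by
  simp only [weight, Real.rpow_add_one hz.ne']; ring

theorem integrableOn_weight (hβ : 0 < β + 1) (hν : -1 < ν) :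
    IntegrableOn (weight β ν) (Ioi 0) := by
  refine (integrableOn_rpow_mul_exp_neg_mul_rpow hν hβ (inv_pos.mpr hβ)).congr_fun
    (fun z _ => ?_) measurableSet_Ioi
  simp only [weight, div_eq_inv_mul, neg_mul, mul_neg]

theorem integral_weight_pos (hβ : 0 < β + 1) (hν : -1 < ν) :
    0 < ∫ z in Ioi 0, weight β ν z := by
  refine (setIntegral_pos_iff_support_of_nonneg_ae ?_ (integrableOn_weight hβ hν)).mpr ?_
  · filter_upwards [ae_restrict_mem measurableSet_Ioi] with z hz using (weight_pos hz).le
  · have hsupp : Ioi 0 ⊆ Function.support (weight β ν) ∩ Ioi 0 := fun z hz =>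
      ⟨(weight_pos hz).ne', hz⟩
    exact (by simp : (0 : ENNReal) < volume (Ioi (0 : ℝ))).trans_le (measure_mono hsupp)

theorem G_eq (l : ℂ) :
    G β ν l = ∫ z in Ioi 0, (weight β ν z : ℂ) * Complex.exp (-l * z) := rfl

theorem G_zero : G β ν 0 = ((∫ z in Ioi 0, weight β ν z : ℝ) : ℂ) := by
  simp only [G_eq, neg_zero, zero_mul, Complex.exp_zero, mul_one]
  exact integral_ofReal

theorem integrableOn_G_integrand (hβ : 0 < β + 1) (hν : -1 < ν) {l : ℂ} (hl : 0 ≤ l.re) :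
    IntegrableOn (fun z : ℝ => (weight β ν z : ℂ) * Complex.exp (-l * z)) (Ioi 0) := by
  refine (integrableOn_weight hβ hν).mono' (by unfold weight; fun_prop) ?_
  filter_upwards [ae_restrict_mem measurableSet_Ioi] with z hz
  rw [norm_mul, Complex.norm_real, Real.norm_of_nonneg (weight_pos hz).le, Complex.norm_exp]
  refine mul_le_of_le_one_right (weight_pos hz).le (Real.exp_le_one_iff.mpr ?_)
  simpa using mul_nonneg hl (le_of_lt hz)

theorem norm_G_sub_G_zero_le (hβ : 0 < β + 1) (hν : -1 < ν) {l : ℂ} (hl : 0 ≤ l.re) :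
    ‖G β ν l - G β ν 0‖ ≤ ‖l‖ * ∫ z in Ioi 0, weight β (ν + 1) z := by
  have hsub : G β ν l - G β ν 0 =
      ∫ z in Ioi 0, (weight β ν z : ℂ) * (Complex.exp (-l * z) - 1) := by
    rw [G_eq, G_eq, ← integral_sub (integrableOn_G_integrand hβ hν hl)
      (integrableOn_G_integrand hβ hν (by simp))]
    simp only [neg_zero, zero_mul, Complex.exp_zero, mul_sub, mul_one]
  rw [hsub, ← integral_const_mul]
  refine norm_integral_le_of_norm_le
    ((integrableOn_weight hβ (by linarith)).const_mul _) ?_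
  filter_upwards [ae_restrict_mem measurableSet_Ioi] with z hz
  have hexp : ‖Complex.exp (-l * z) - 1‖ ≤ ‖l‖ * z := by
    have hre : (-l * z).re ≤ 0 := by simpa using mul_nonneg hl (le_of_lt hz)
    simpa [abs_of_pos (mem_Ioi.mp hz)] using Complex.norm_exp_sub_one_le_norm_of_re_nonpos hre
  rw [norm_mul, Complex.norm_real, Real.norm_of_nonneg (weight_pos hz).le, weight_add_one hz]
  calc weight β ν z * ‖Complex.exp (-l * z) - 1‖ ≤ weight β ν z * (‖l‖ * z) :=
        mul_le_mul_of_nonneg_left hexp (weight_pos hz).le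
    _ = ‖l‖ * (z * weight β ν z) := by ring

end BeckerDoring

open BeckerDoring

/-- If `ϑ > G_{β,ν+1}(0)`, the eigenvalue equation `ϑλ + G_{β,ν}(λ) = 0` has no root
in the closed right half plane. -/
theorem stmt0 (β ν ϑ : ℝ) (hβ : 0 ≤ β) (hν : 0 ≤ ν)
    (hϑ : (G β (ν + 1) 0).re < ϑ) :
    ∀ l : ℂ, 0 ≤ l.re → (ϑ : ℂ) * l + G β ν l ≠ 0 := by
  intro l hl hroot
  have hβ' : 0 < β + 1 := by linarith
  have hν' : -1 < ν := by linarith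
  set W₀ := ∫ z in Ioi 0, weight β ν z
  have hW₀ : 0 < W₀ := integral_weight_pos hβ' hν'
  rw [G_zero, Complex.ofReal_re] at hϑ
  have hϑ₀ : 0 ≤ ϑ := (integral_weight_pos hβ' (by linarith)).le.trans hϑ.le
  have hupper : ‖(ϑ : ℂ) * l + W₀‖ ≤ ϑ * ‖l‖ := by
    have hdiff := norm_G_sub_G_zero_le hβ' hν' hl
    rw [G_zero, ← norm_neg, show -(G β ν l - W₀) = (ϑ : ℂ) * l + W₀ by
      linear_combination -hroot] at hdiff
    exact hdiff.trans (by rw [mul_comm]; exact mul_le_mul_of_nonneg_right hϑ.le (norm_nonneg l))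
  have hlower := Complex.sq_norm_add_sq_le_sq_norm_add_ofReal
    (by simpa using mul_nonneg hϑ₀ hl : 0 ≤ ((ϑ : ℂ) * l).re) hW₀.le
  rw [norm_mul, Complex.norm_real, Real.norm_of_nonneg hϑ₀] at hlower
  linarith [pow_le_pow_left₀ (norm_nonneg _) hupper 2, pow_pos hW₀ 2]
end

section
/- Let ν ≥ 0 and t > 0. There exists ϑ > 0 such that ϑ·(it) + G_{0,ν}(it) = 0 (i.e., λ = it is a purely imaginary eigenvalue for some positive value of the rescaled removal parameter) if and only if there exists a nonnegative integer k with 4k < ν such that arctan(t) = (π/2)·(1+4k)/(1+ν). In particular, no such eigenvalue exists when ν = 0. -/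
open MeasureTheory Set Filter Topology Complex

section LaplaceTransformCpow

variable {a : ℂ}

lemma norm_ofReal_cpow_mul_cexp_neg_mul {z : ℝ} (hz : 0 < z) (b s : ℂ) :
    ‖(z : ℂ) ^ b * cexp (-(s * z))‖ = z ^ b.re * Real.exp (-s.re * z) := by
  rw [norm_mul, norm_cpow_eq_rpow_re_of_pos hz, norm_exp]
  simp

lemma measurable_ofReal_cpow_mul_cexp_neg_mul (b s : ℂ) :
    Measurable fun z : ℝ => (z : ℂ) ^ b * cexp (-(s * z)) := by
  fun_prop

lemma integrableOn_cpow_mul_cexp_neg_mul (ha : 0 < a.re) {s : ℂ} (hs : 0 < s.re) :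
    IntegrableOn (fun z : ℝ => (z : ℂ) ^ (a - 1) * cexp (-(s * z))) (Ioi 0) := by
  have hdom : IntegrableOn (fun z : ℝ => z ^ (a - 1).re * Real.exp (-s.re * z)) (Ioi 0) := by
    simpa using integrableOn_rpow_mul_exp_neg_mul_rpow (p := 1) (by simpa using ha) one_pos hs
  refine hdom.mono' (measurable_ofReal_cpow_mul_cexp_neg_mul _ _).aestronglyMeasurable ?_
  filter_upwards [ae_restrict_mem measurableSet_Ioi] with z hz
  exact (norm_ofReal_cpow_mul_cexp_neg_mul hz _ _).le

lemma differentiableOn_integral_cpow_mul_cexp_neg_mul (ha : 0 < a.re) :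
    DifferentiableOn ℂ
      (fun s : ℂ => ∫ z in Ioi (0 : ℝ), (z : ℂ) ^ (a - 1) * cexp (-(s * z))) {s | 0 < s.re} := by
  intro s₀ (hs₀ : 0 < s₀.re)
  refine DifferentiableAt.differentiableWithinAt ?_
  set ε := s₀.re / 2 with hε
  have hre_ball : ∀ s ∈ Metric.ball s₀ ε, ε < s.re := fun s hs => by
    have := (abs_re_le_norm (s - s₀)).trans_lt (mem_ball_iff_norm.mp hs)
    rw [sub_re, abs_lt] at this
    linarith
  have hdom : IntegrableOn (fun z : ℝ => z ^ a.re * Real.exp (-ε * z)) (Ioi 0) := by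
    simpa using integrableOn_rpow_mul_exp_neg_mul_rpow (p := 1) (by linarith) one_pos
      (by positivity : 0 < ε)
  have hderiv : ∀ z : ℝ, 0 < z → ∀ s : ℂ,
      HasDerivAt (fun s : ℂ => (z : ℂ) ^ (a - 1) * cexp (-(s * z)))
        (-((z : ℂ) ^ a * cexp (-(s * z)))) s := fun z hz s => by
    refine ((((hasDerivAt_id s).mul_const (z : ℂ)).neg.cexp).const_mul
      ((z : ℂ) ^ (a - 1))).congr_deriv ?_
    rw [cpow_sub _ _ (ofReal_ne_zero.mpr hz.ne'), cpow_one]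
    field_simp [ofReal_ne_zero.mpr hz.ne']
    simp only [id_eq, Pi.neg_apply]
  have hbound : ∀ z : ℝ, 0 < z → ∀ s ∈ Metric.ball s₀ ε,
      ‖-((z : ℂ) ^ a * cexp (-(s * z)))‖ ≤ z ^ a.re * Real.exp (-ε * z) :=
    fun z hz s hs => by
    rw [norm_neg, norm_ofReal_cpow_mul_cexp_neg_mul hz]
    gcongr
    nlinarith [hre_ball s hs]
  refine (hasDerivAt_integral_of_dominated_loc_of_deriv_le
    (F' := fun s z => -((z : ℂ) ^ a * cexp (-(s * z))))
    (Metric.ball_mem_nhds s₀ (by positivity : 0 < ε))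
    (.of_forall fun s => (measurable_ofReal_cpow_mul_cexp_neg_mul _ s).aestronglyMeasurable)
    (integrableOn_cpow_mul_cexp_neg_mul ha hs₀)
    (measurable_ofReal_cpow_mul_cexp_neg_mul _ s₀).neg.aestronglyMeasurable
    ?_ hdom ?_).2.differentiableAt
  · filter_upwards [ae_restrict_mem measurableSet_Ioi] with z hz using hbound z hz
  · filter_upwards [ae_restrict_mem measurableSet_Ioi] with z hz s _ using hderiv z hz s

lemma integral_cpow_mul_cexp_neg_mul_Ioi_of_re_pos (ha : 0 < a.re) {s : ℂ} (hs : 0 < s.re) :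
    ∫ z in Ioi (0 : ℝ), (z : ℂ) ^ (a - 1) * cexp (-(s * z)) = Gamma a * s ^ (-a) := by
  have hU : IsOpen {s : ℂ | 0 < s.re} := isOpen_lt continuous_const continuous_re
  have hrhs : DifferentiableOn ℂ (fun s : ℂ => Gamma a * s ^ (-a)) {s | 0 < s.re} :=
    fun s (hs : 0 < s.re) =>
      ((differentiableAt_id.cpow_const (Or.inl hs)).const_mul _).differentiableWithinAt
  have hreal : ∀ r : ℝ, 0 < r →
      ∫ z in Ioi (0 : ℝ), (z : ℂ) ^ (a - 1) * cexp (-(r * z)) = Gamma a * (r : ℂ) ^ (-a) :=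
    fun r hr => by
      rw [integral_cpow_mul_exp_neg_mul_Ioi ha hr, mul_comm, one_div,
        inv_cpow _ _ (by simpa [arg_ofReal_of_nonneg hr.le] using Real.pi_ne_zero.symm),
        cpow_neg]
  -- Both sides are holomorphic on the right half-plane and agree on `(0, ∞)` by the real case.
  have hfreq : ∃ᶠ s in 𝓝[≠] (1 : ℂ),
      ∫ z in Ioi (0 : ℝ), (z : ℂ) ^ (a - 1) * cexp (-(s * z)) = Gamma a * s ^ (-a) := by
    have hofReal : Tendsto ((↑) : ℝ → ℂ) (𝓝[≠] 1) (𝓝[≠] 1) :=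
      continuous_ofReal.continuousWithinAt.tendsto_nhdsWithin fun r hr => by simpa using hr
    exact hofReal.frequently ((eventually_nhdsWithin_of_eventually_nhds
      (eventually_gt_nhds one_pos)).frequently.mono hreal)
  exact (differentiableOn_integral_cpow_mul_cexp_neg_mul ha).analyticOnNhd hU
    |>.eqOn_of_preconnected_of_frequently_eq (hrhs.analyticOnNhd hU)
      (convex_halfSpace_re_gt 0).isPreconnected (by simp) hfreq hs

end LaplaceTransformCpow

theorem G_zero_eq {ν : ℝ} (hν : -1 < ν) {s : ℂ} (hs : -1 < s.re) :
    G 0 ν s = Real.Gamma (ν + 1) * (1 + s) ^ ((-(ν + 1) : ℝ) : ℂ) := by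
  have key := integral_cpow_mul_cexp_neg_mul_Ioi_of_re_pos (a := ν + 1)
    (by simp only [add_re, ofReal_re, one_re]; linarith) (s := 1 + s)
    (by simp only [add_re, one_re]; linarith)
  rw [G, ← Gamma_ofReal]
  push_cast [zero_add, Real.rpow_one, div_one]
  rw [← key]
  refine setIntegral_congr_fun measurableSet_Ioi fun z (hz : 0 < z) => ?_
  rw [ofReal_cpow hz.le, add_sub_cancel_right, mul_assoc, ← Complex.exp_add]
  ring_nf

lemma Complex.arg_eq_arctan_of_re_pos {w : ℂ} (hw : 0 < w.re) :
    arg w = Real.arctan (w.im / w.re) := by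
  have habs : |arg w| < Real.pi / 2 := abs_arg_lt_pi_div_two_iff.mpr (Or.inl hw)
  rw [← tan_arg, Real.arctan_tan (neg_lt_of_abs_lt habs) (lt_of_abs_lt habs)]

lemma Real.cos_eq_zero_and_sin_neg_iff {θ : ℝ} : cos θ = 0 ∧ sin θ < 0 ↔ sin θ = -1 := by
  have := sin_sq_add_cos_sq θ
  constructor
  · rintro ⟨hcos, hsin⟩
    nlinarith
  · intro hsin
    exact ⟨by nlinarith, by linarith⟩

lemma re_eq_zero_and_im_neg_iff_sin_arg_mul_eq_neg_one {A : ℝ} (hA : 0 < A) {w : ℂ}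
    (hw : w ≠ 0) (y : ℝ) :
    (A * w ^ (y : ℂ)).re = 0 ∧ (A * w ^ (y : ℂ)).im < 0 ↔ Real.sin (arg w * y) = -1 := by
  have hpos : 0 < A * ‖w‖ ^ y := by positivity
  rw [re_ofReal_mul, im_ofReal_mul, cpow_ofReal_re, cpow_ofReal_im, ← mul_assoc, ← mul_assoc,
    mul_eq_zero, mul_neg_iff]
  simp only [hpos, hpos.ne', hpos.not_gt, false_or, true_and, false_and, or_false]
  exact Real.cos_eq_zero_and_sin_neg_iff

lemma exists_pos_mul_I_mul_add_eq_zero_iff {t : ℝ} (ht : 0 < t) (c : ℂ) :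
    (∃ ϑ : ℝ, 0 < ϑ ∧ (ϑ : ℂ) * (I * t) + c = 0) ↔ c.re = 0 ∧ c.im < 0 := by
  constructor
  · rintro ⟨ϑ, hϑ, h⟩
    rw [eq_neg_of_add_eq_zero_right h]
    simpa using mul_pos hϑ ht
  · rintro ⟨hre, him⟩
    refine ⟨-c.im / t, div_pos (neg_pos.mpr him) ht, Complex.ext ?_ ?_⟩
    · simp [hre]
    · simp [ht.ne']

lemma exists_int_pi_div_two_add_eq_mul_iff {θ ν : ℝ} (hν : -1 < ν) (hθ₀ : 0 < θ)
    (hθ₁ : θ < Real.pi / 2) :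
    (∃ k : ℤ, Real.pi / 2 + k * (2 * Real.pi) = θ * (ν + 1)) ↔
      ∃ k : ℕ, 4 * (k : ℝ) < ν ∧ θ = Real.pi / 2 * (1 + 4 * (k : ℝ)) / (1 + ν) := by
  have hπ := Real.pi_pos
  have hν' : (1 + ν) ≠ 0 := by linarith
  simp_rw [eq_div_iff hν']
  constructor
  · rintro ⟨k, hk⟩
    have hk₀ : 0 ≤ k := by
      by_contra! hneg
      have : (k : ℝ) ≤ -1 := by exact_mod_cast Int.le_sub_one_of_lt hneg
      nlinarith
    lift k to ℕ using hk₀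
    push_cast at hk
    exact ⟨k, by nlinarith, by linarith⟩
  · rintro ⟨k, -, hk⟩
    exact ⟨k, by push_cast; linarith⟩

/-- For `β = 0`: `λ = it` (with `t > 0`) is a purely imaginary eigenvalue for some
`ϑ > 0` iff `arctan t = (π/2)(1+4k)/(1+ν)` for some nonnegative integer `k` with
`4k < ν`. -/
theorem stmt1 (ν t : ℝ) (hν : 0 ≤ ν) (ht : 0 < t) :
    (∃ ϑ : ℝ, 0 < ϑ ∧
        (ϑ : ℂ) * (Complex.I * (t : ℂ)) + G 0 ν (Complex.I * (t : ℂ)) = 0) ↔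
      (∃ k : ℕ, 4 * (k : ℝ) < ν ∧
        Real.arctan t = Real.pi / 2 * (1 + 4 * (k : ℝ)) / (1 + ν)) := by
  have hw : 0 < (1 + I * t).re := by simp
  have harg : arg (1 + I * t) = Real.arctan t := by simpa using arg_eq_arctan_of_re_pos hw
  rw [exists_pos_mul_I_mul_add_eq_zero_iff ht, G_zero_eq (by linarith) (by simp),
    re_eq_zero_and_im_neg_iff_sin_arg_mul_eq_neg_one (Real.Gamma_pos_of_pos (by linarith))
      (ne_of_apply_ne re hw.ne'),
    harg, mul_neg, Real.sin_neg, neg_inj, Real.sin_eq_one_iff]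
  exact exists_int_pi_div_two_add_eq_mul_iff (by linarith) (Real.arctan_pos.mpr ht)
    (Real.arctan_lt_pi_div_two t)
end

section
/- Let ν > 0 and let k be a nonnegative integer with 4k < ν, and set t₀ = tan(ω_k) with ω_k = (π/2)·(1+4k)/(1+ν) ∈ (0, π/2). Then the function t ↦ Re G_{0,ν}(it) has a strictly negative derivative at t = t₀. (This is the transversal eigenvalue-crossing condition at the Hopf bifurcation points in the case β = 0, and implies sign Re(dλ/dϑ) < 0 at each crossing.) -/
/-! For real `t` and `p > -1`, `G 0 p (i t) = Γ(p+1) (1 + i t)^{-(p+1)}`. Differentiating under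
the integral gives `d/dt G 0 p (i t) = -i G 0 (p+1) (i t)`, and integrating by parts gives
`(1 + i t) G 0 (p+1) (i t) = (p+1) G 0 p (i t)`; together they make `G 0 p (i t) (1 + i t)^{p+1}`
constant in `t`, equal to its value `Γ(p+1)` at `t = 0`.

At `t = tan ω` we have `1 + i t = e^{iω} / cos ω`, so the derivative of `Re G 0 ν (i t)` there is
`-Γ(ν+2) cos^{ν+2} ω · sin((ν+2) ω)`. For `ω = ω_k` one has `(ν+2) ω = ω + π/2 + 2πk`, so the sine
equals `cos ω > 0`. -/

open MeasureTheory Set Filter Complex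
open scoped Real

noncomputable def gammaKernel (p t z : ℝ) : ℂ :=
  ((z ^ p * Real.exp (-z) : ℝ) : ℂ) * cexp (-(I * t) * z)

lemma G_zero_I_mul (p t : ℝ) : G 0 p (I * t) = ∫ z in Ioi 0, gammaKernel p t z := by
  simp [G, gammaKernel]

lemma norm_gammaKernel (p t : ℝ) {z : ℝ} (hz : 0 ≤ z) :
    ‖gammaKernel p t z‖ = z ^ p * Real.exp (-z) := by
  have hphase : -(I * t) * z = ((-(t * z) : ℝ) : ℂ) * I := by push_cast; ring
  rw [gammaKernel, norm_mul, hphase, norm_exp_ofReal_mul_I, mul_one, norm_real,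
    Real.norm_of_nonneg (by positivity)]

lemma integrableOn_rpow_mul_exp_neg {p : ℝ} (hp : -1 < p) :
    IntegrableOn (fun z : ℝ => z ^ p * Real.exp (-z)) (Ioi 0) := by
  simpa only [add_sub_cancel_right, mul_comm (Real.exp _)] using
    Real.GammaIntegral_convergent (s := p + 1) (by linarith)

lemma continuousOn_gammaKernel (p t : ℝ) : ContinuousOn (gammaKernel p t) (Ioi 0) := by
  refine ContinuousOn.mul (continuous_ofReal.comp_continuousOn ?_) (by fun_prop)
  exact (continuousOn_id.rpow_const fun z hz => Or.inl (ne_of_gt hz)).mul (by fun_prop)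

lemma integrableOn_gammaKernel {p : ℝ} (hp : -1 < p) (t : ℝ) :
    IntegrableOn (gammaKernel p t) (Ioi 0) := by
  refine (integrableOn_rpow_mul_exp_neg hp).mono'
    ((continuousOn_gammaKernel p t).aestronglyMeasurable measurableSet_Ioi) ?_
  filter_upwards [ae_restrict_mem measurableSet_Ioi] with z hz
  exact (norm_gammaKernel p t (le_of_lt hz)).le

lemma hasDerivAt_gammaKernel (p : ℝ) {z : ℝ} (hz : 0 < z) (t : ℝ) :
    HasDerivAt (fun u : ℝ => gammaKernel p u z) (-I * gammaKernel (p + 1) t z) t := by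
  have hphase : HasDerivAt (fun u : ℝ => -(I * u) * z) (-(I * z)) t := by
    simpa using ((ofRealCLM.hasDerivAt (x := t)).const_mul I).neg.mul_const (z : ℂ)
  refine ((hphase.cexp).const_mul ((z ^ p * Real.exp (-z) : ℝ) : ℂ)).congr_deriv ?_
  simp only [gammaKernel, Real.rpow_add_one (ne_of_gt hz)]
  push_cast
  ring

lemma hasDerivAt_G_zero_I_mul {p : ℝ} (hp : -1 < p) (t : ℝ) :
    HasDerivAt (fun u : ℝ => G 0 p (I * u)) (-I * G 0 (p + 1) (I * t)) t := by
  simp only [G_zero_I_mul, ← integral_const_mul]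
  refine (hasDerivAt_integral_of_dominated_loc_of_deriv_le
    (F' := fun u z => -I * gammaKernel (p + 1) u z)
    (bound := fun z => z ^ (p + 1) * Real.exp (-z)) univ_mem
    (Eventually.of_forall fun u =>
      (continuousOn_gammaKernel p u).aestronglyMeasurable measurableSet_Ioi)
    (integrableOn_gammaKernel hp t)
    (((continuousOn_gammaKernel (p + 1) t).aestronglyMeasurable measurableSet_Ioi).const_mul _)
    ?_ (integrableOn_rpow_mul_exp_neg (by linarith)) ?_).2
  · filter_upwards [ae_restrict_mem measurableSet_Ioi] with z hz u _
    rw [norm_mul, norm_neg, norm_I, one_mul, norm_gammaKernel _ _ (le_of_lt hz)]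
  · filter_upwards [ae_restrict_mem measurableSet_Ioi] with z hz u _
    exact hasDerivAt_gammaKernel p hz u

lemma hasDerivAt_gammaKernel_succ (p t : ℝ) {z : ℝ} (hz : 0 < z) :
    HasDerivAt (gammaKernel (p + 1) t)
      ((p + 1) * gammaKernel p t z - (1 + I * t) * gammaKernel (p + 1) t z) z := by
  have hpow : HasDerivAt (fun x : ℝ => x ^ (p + 1)) ((p + 1) * z ^ p) z := by
    simpa using Real.hasDerivAt_rpow_const (x := z) (p := p + 1) (Or.inl (ne_of_gt hz))
  have hphase : HasDerivAt (fun x : ℝ => -(I * t) * x) (-(I * t)) z := by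
    simpa using (ofRealCLM.hasDerivAt (x := z)).const_mul (-(I * t))
  refine ((hpow.mul (hasDerivAt_neg z).exp).ofReal_comp.mul hphase.cexp).congr_deriv ?_
  simp only [gammaKernel, Pi.mul_apply]
  push_cast
  ring

lemma one_add_I_mul_mul_G_zero_succ {p : ℝ} (hp : -1 < p) (t : ℝ) :
    (1 + I * t) * G 0 (p + 1) (I * t) = (p + 1) * G 0 p (I * t) := by
  have hp1 : 0 < p + 1 := by linarith
  have hcont : ContinuousWithinAt (gammaKernel (p + 1) t) (Ici 0) 0 := by
    refine (ContinuousAt.mul ?_ (by fun_prop)).continuousWithinAt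
    exact continuous_ofReal.continuousAt.comp
      ((Real.continuousAt_rpow_const 0 (p + 1) (Or.inr hp1.le)).mul (by fun_prop))
  have htend : Tendsto (gammaKernel (p + 1) t) atTop (nhds 0) := by
    refine squeeze_zero_norm' ?_
      (by simpa using tendsto_rpow_mul_exp_neg_mul_atTop_nhds_zero (p + 1) 1 one_pos)
    filter_upwards [eventually_ge_atTop 0] with z hz
    exact (norm_gammaKernel _ _ hz).le
  have hFTC := integral_Ioi_of_hasDerivAt_of_tendsto hcont
    (fun z hz => hasDerivAt_gammaKernel_succ p t hz)
    (((integrableOn_gammaKernel hp t).const_mul _).sub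
      ((integrableOn_gammaKernel (by linarith) t).const_mul _)) htend
  rw [integral_sub ((integrableOn_gammaKernel hp t).const_mul _)
      ((integrableOn_gammaKernel (by linarith) t).const_mul _),
    integral_const_mul, integral_const_mul] at hFTC
  have hzero : gammaKernel (p + 1) t 0 = 0 := by simp [gammaKernel, Real.zero_rpow hp1.ne']
  rw [hzero, sub_zero] at hFTC
  rw [G_zero_I_mul, G_zero_I_mul]
  linear_combination -hFTC

lemma G_zero_zero {p : ℝ} (hp : -1 < p) : G 0 p 0 = Real.Gamma (p + 1) := by
  rw [Real.Gamma_eq_integral (by linarith), add_sub_cancel_right, ← integral_complex_ofReal]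
  refine setIntegral_congr_fun measurableSet_Ioi fun z _ => ?_
  simp [mul_comm]

lemma one_add_I_mul_mem_slitPlane (t : ℝ) : 1 + I * t ∈ slitPlane :=
  mem_slitPlane_iff.mpr (Or.inl (by simp))

lemma G_zero_I_mul_eq {p : ℝ} (hp : -1 < p) (t : ℝ) :
    G 0 p (I * t) = Real.Gamma (p + 1) * (1 + I * t) ^ (-((p : ℂ) + 1)) := by
  set q : ℝ → ℂ := fun u => G 0 p (I * u) * (1 + I * u) ^ ((p : ℂ) + 1)
  have hq : ∀ u, HasDerivAt q 0 u := by
    intro u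
    have hbase : HasDerivAt (fun u : ℝ => 1 + I * u) I u := by
      simpa using ((ofRealCLM.hasDerivAt (x := u)).const_mul I).const_add 1
    have hpow := (hasStrictDerivAt_cpow_const (c := (p : ℂ) + 1)
      (one_add_I_mul_mem_slitPlane u)).hasDerivAt.comp u hbase
    refine ((hasDerivAt_G_zero_I_mul hp u).mul hpow).congr_deriv ?_
    have hsplit : (1 + I * u) ^ ((p : ℂ) + 1) = (1 + I * u) ^ (p : ℂ) * (1 + I * u) := by
      rw [cpow_add _ _ (slitPlane_ne_zero (one_add_I_mul_mem_slitPlane u)), cpow_one]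
    rw [Function.comp_apply, hsplit, add_sub_cancel_right]
    linear_combination (-I * (1 + I * u) ^ (p : ℂ)) * one_add_I_mul_mul_G_zero_succ hp u
  have hconst : q t = q 0 :=
    is_const_of_deriv_eq_zero (fun u => (hq u).differentiableAt) (fun u => (hq u).deriv) t 0
  simp only [q, ofReal_zero, mul_zero, add_zero, one_cpow, mul_one, G_zero_zero hp] at hconst
  rw [cpow_neg, ← hconst, mul_inv_cancel_right₀]
  exact cpow_ne_zero_iff.mpr (Or.inl (slitPlane_ne_zero (one_add_I_mul_mem_slitPlane t)))

lemma one_add_I_mul_tan_cpow_neg {ω : ℝ} (hω : ω ∈ Ioo (-(π / 2)) (π / 2)) (s : ℝ) :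
    (1 + I * Real.tan ω) ^ (-(s : ℂ)) = (Real.cos ω ^ s : ℝ) * cexp (-(s * ω) * I) := by
  have hcos : 0 < Real.cos ω := Real.cos_pos_of_mem_Ioo hω
  have hpolar : 1 + I * Real.tan ω = ((Real.cos ω)⁻¹ : ℝ) * cexp (ω * I) := by
    have : (Real.cos ω : ℂ) ≠ 0 := ofReal_ne_zero.mpr hcos.ne'
    rw [exp_mul_I, ← ofReal_cos, ← ofReal_sin, Real.tan_eq_sin_div_cos, ofReal_div, ofReal_inv]
    field_simp
  have hlog : log (1 + I * Real.tan ω) = (-Real.log (Real.cos ω) : ℝ) + ω * I := by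
    rw [hpolar, log_ofReal_mul (inv_pos.mpr hcos) (exp_ne_zero _), Real.log_inv,
      log_exp (by simp; linarith [hω.1, Real.pi_pos]) (by simp; linarith [hω.2, Real.pi_pos])]
  have hne : 1 + I * Real.tan ω ≠ 0 :=
    hpolar ▸ mul_ne_zero (ofReal_ne_zero.mpr (inv_ne_zero hcos.ne')) (exp_ne_zero _)
  rw [cpow_def_of_ne_zero hne, hlog, Real.rpow_def_of_pos hcos, ofReal_exp, ← exp_add]
  congr 1
  push_cast
  ring

lemma re_neg_I_mul_G_zero_I_mul_tan {p : ℝ} (hp : -1 < p) {ω : ℝ}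
    (hω : ω ∈ Ioo (-(π / 2)) (π / 2)) :
    (-I * G 0 p (I * Real.tan ω)).re =
      -(Real.Gamma (p + 1) * Real.cos ω ^ (p + 1) * Real.sin ((p + 1) * ω)) := by
  rw [G_zero_I_mul_eq hp, show -((p : ℂ) + 1) = -((p + 1 : ℝ) : ℂ) by push_cast; ring,
    one_add_I_mul_tan_cpow_neg hω, exp_mul_I, ← ofReal_mul, ← ofReal_neg, ← ofReal_cos,
    ← ofReal_sin]
  simp only [Real.cos_neg, Real.sin_neg, neg_mul, neg_re, mul_re, mul_im, add_re, add_im,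
    I_re, I_im, ofReal_re, ofReal_im]
  ring

theorem stmt2_general (ν : ℝ) (k : ℕ) (hk : 4 * (k : ℝ) < ν) :
    ∃ d : ℝ, d < 0 ∧
      HasDerivAt (fun t : ℝ => (G 0 ν (Complex.I * (t : ℂ))).re) d
        (Real.tan (Real.pi / 2 * (1 + 4 * (k : ℝ)) / (1 + ν))) := by
  set ω := π / 2 * (1 + 4 * (k : ℝ)) / (1 + ν) with hω_def
  have hν : 0 < ν := lt_of_le_of_lt (by positivity) hk
  have hω_pos : 0 < ω := by positivity
  have hω_lt : ω < π / 2 := by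
    rw [div_lt_iff₀ (by linarith)]
    nlinarith [Real.pi_pos]
  have hsin : Real.sin ((ν + 1 + 1) * ω) = Real.cos ω := by
    have hangle : (ν + 1 + 1) * ω = ω + π / 2 + k * (2 * π) := by
      rw [hω_def]
      field_simp
      ring
    rw [hangle, Real.sin_add_nat_mul_two_pi, Real.sin_add_pi_div_two]
  have hω : ω ∈ Ioo (-(π / 2)) (π / 2) := ⟨by linarith, hω_lt⟩
  have hderiv := reCLM.hasFDerivAt.comp_hasDerivAt (Real.tan ω)
    (hasDerivAt_G_zero_I_mul (p := ν) (by linarith) (Real.tan ω))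
  refine ⟨_, ?_, hderiv⟩
  rw [reCLM_apply, re_neg_I_mul_G_zero_I_mul_tan (by linarith) hω, hsin, neg_lt_zero]
  have hcos : 0 < Real.cos ω := Real.cos_pos_of_mem_Ioo hω
  positivity

/-- Transversal eigenvalue crossing for `β = 0`: at `t₀ = tan ω_k` with
`ω_k = (π/2)(1+4k)/(1+ν)`, the function `t ↦ Re G_{0,ν}(it)` has a strictly
negative derivative. -/
theorem stmt2 (ν : ℝ) (hν : 0 < ν) (k : ℕ) (hk : 4 * (k : ℝ) < ν) :
    ∃ d : ℝ, d < 0 ∧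
      HasDerivAt (fun t : ℝ => (G 0 ν (Complex.I * (t : ℂ))).re) d
        (Real.tan (Real.pi / 2 * (1 + 4 * (k : ℝ)) / (1 + ν))) :=
  stmt2_general ν k hk
end

section
/- Let β ≥ 0 and ν ≥ 0. The function λ ↦ G_{β,ν}(λ) is complex differentiable at every λ with Re(λ) > −1, with derivative G_{β,ν}'(λ) = −G_{β,ν+1}(λ). -/
/-!
Differentiation under the integral sign: the `λ`-derivative of the integrand of `G_{β,ν}(λ)` is
minus the integrand of `G_{β,ν+1}(λ)`. Bernoulli's inequality `z - 1 ≤ z^(β+1)/(β+1)` bounds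
`exp(-z^(β+1)/(β+1)) |e^{-xz}|` by `e · e^{-(1 + Re x) z}`, and on the ball of radius
`ε = (1 + Re λ)/2` around `λ` we have `1 + Re x > ε > 0`, so both integrands are dominated
by `e · z^s e^{-εz}` with `s = ν, ν + 1`, which is integrable on `(0, ∞)`.
-/

open Set MeasureTheory Metric Filter

noncomputable def gIntegrand (β ν : ℝ) (l : ℂ) (z : ℝ) : ℂ :=
  ((z ^ ν * Real.exp (-z ^ (β + 1) / (β + 1)) : ℝ) : ℂ) * Complex.exp (-l * (z : ℂ))

lemma G_eq_integral_gIntegrand (β ν : ℝ) :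
    G β ν = fun l => ∫ z in Ioi (0 : ℝ), gIntegrand β ν l z := rfl

lemma sub_one_le_rpow_div {p z : ℝ} (hp : 1 ≤ p) (hz : 0 ≤ z) : z - 1 ≤ z ^ p / p := by
  have bernoulli := one_add_mul_self_le_rpow_one_add (s := z - 1) (by linarith) hp
  rw [add_sub_cancel] at bernoulli
  rw [le_div_iff₀ (by linarith)]
  nlinarith

lemma integrableOn_rpow_mul_exp_neg_mul {s b : ℝ} (hs : -1 < s) (hb : 0 < b) :
    IntegrableOn (fun z : ℝ => z ^ s * Real.exp (-b * z)) (Ioi 0) := by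
  simpa only [Real.rpow_one] using
    integrableOn_rpow_mul_exp_neg_mul_rpow (p := 1) hs zero_lt_one hb

lemma continuousOn_gIntegrand (β ν : ℝ) (x : ℂ) : ContinuousOn (gIntegrand β ν x) (Ioi 0) := by
  have hrpow : ∀ p : ℝ, ContinuousOn (fun z : ℝ => z ^ p) (Ioi 0) := fun p =>
    fun z hz => (Real.continuousAt_rpow_const z p (Or.inl hz.ne')).continuousWithinAt
  refine (Complex.continuous_ofReal.comp_continuousOn
    ((hrpow ν).mul (Real.continuous_exp.comp_continuousOn ((hrpow _).neg.div_const _)))).mul ?_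
  fun_prop

lemma norm_gIntegrand (β ν : ℝ) (x : ℂ) {z : ℝ} (hz : 0 ≤ z) :
    ‖gIntegrand β ν x z‖ =
      z ^ ν * Real.exp (-z ^ (β + 1) / (β + 1)) * Real.exp (-x.re * z) := by
  simp only [gIntegrand, norm_mul, Complex.norm_real, Real.norm_eq_abs, Complex.norm_exp,
    abs_of_nonneg (Real.rpow_nonneg hz ν), abs_of_pos (Real.exp_pos _)]
  simp [Complex.mul_re]

lemma norm_gIntegrand_le {β : ℝ} (hβ : 0 ≤ β) (ν : ℝ) {x : ℂ} {c : ℝ} (hc : c ≤ x.re)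
    {z : ℝ} (hz : 0 ≤ z) :
    ‖gIntegrand β ν x z‖ ≤ Real.exp 1 * (z ^ ν * Real.exp (-(1 + c) * z)) := by
  have hexp : Real.exp (-z ^ (β + 1) / (β + 1)) * Real.exp (-x.re * z)
      ≤ Real.exp 1 * Real.exp (-(1 + c) * z) := by
    rw [← Real.exp_add, ← Real.exp_add, Real.exp_le_exp, neg_div]
    have := sub_one_le_rpow_div (p := β + 1) (by linarith) hz
    nlinarith
  rw [norm_gIntegrand β ν x hz, mul_assoc, mul_left_comm (Real.exp 1)]
  exact mul_le_mul_of_nonneg_left hexp (Real.rpow_nonneg hz ν)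

lemma integrableOn_gIntegrand {β ν : ℝ} (hβ : 0 ≤ β) (hν : -1 < ν) {x : ℂ} (hx : -1 < x.re) :
    IntegrableOn (gIntegrand β ν x) (Ioi 0) := by
  refine Integrable.mono'
    ((integrableOn_rpow_mul_exp_neg_mul hν (b := 1 + x.re) (by linarith)).const_mul (Real.exp 1))
    ((continuousOn_gIntegrand β ν x).aestronglyMeasurable measurableSet_Ioi) ?_
  filter_upwards [ae_restrict_mem measurableSet_Ioi] with z hz
  exact norm_gIntegrand_le hβ ν le_rfl (le_of_lt hz)

lemma hasDerivAt_gIntegrand (β ν : ℝ) (x : ℂ) {z : ℝ} (hz : 0 < z) :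
    HasDerivAt (gIntegrand β ν · z) (-gIntegrand β (ν + 1) x z) x := by
  have hlin : HasDerivAt (fun x : ℂ => -x * (z : ℂ)) (-(z : ℂ)) x := by
    simpa using (hasDerivAt_id x).neg.mul_const (z : ℂ)
  refine (hlin.cexp.const_mul ((z ^ ν * Real.exp (-z ^ (β + 1) / (β + 1)) : ℝ) : ℂ)).congr_deriv ?_
  rw [gIntegrand, Real.rpow_add_one hz.ne' ν]
  push_cast
  ring

/-- `G_{β,ν}` is complex differentiable for `Re λ > −1`, with
`G_{β,ν}'(λ) = −G_{β,ν+1}(λ)`. -/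
theorem stmt5 (β ν : ℝ) (hβ : 0 ≤ β) (hν : 0 ≤ ν) (l : ℂ) (hl : -1 < l.re) :
    HasDerivAt (G β ν) (-(G β (ν + 1) l)) l := by
  set ε := (1 + l.re) / 2 with hε_def
  have hε : 0 < ε := by linarith
  have hre_ball : ∀ x ∈ ball l ε, l.re - ε ≤ x.re := fun x hx => by
    have := (Complex.re_le_norm (l - x)).trans (mem_ball_iff_norm'.mp hx).le
    rw [Complex.sub_re] at this
    linarith
  have hbound : ∀ᵐ z ∂volume.restrict (Ioi 0), ∀ x ∈ ball l ε,
      ‖-gIntegrand β (ν + 1) x z‖ ≤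
        Real.exp 1 * (z ^ (ν + 1) * Real.exp (-(1 + (l.re - ε)) * z)) := by
    filter_upwards [ae_restrict_mem measurableSet_Ioi] with z hz x hx
    rw [norm_neg]
    exact norm_gIntegrand_le hβ _ (hre_ball x hx) (le_of_lt hz)
  have hdiff : ∀ᵐ z ∂volume.restrict (Ioi 0), ∀ x ∈ ball l ε,
      HasDerivAt (gIntegrand β ν · z) (-gIntegrand β (ν + 1) x z) x := by
    filter_upwards [ae_restrict_mem measurableSet_Ioi] with z hz x _
    exact hasDerivAt_gIntegrand β ν x hz
  have hderiv := hasDerivAt_integral_of_dominated_loc_of_deriv_le (ball_mem_nhds l hε)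
    (Eventually.of_forall fun x =>
      (continuousOn_gIntegrand β ν x).aestronglyMeasurable measurableSet_Ioi)
    (integrableOn_gIntegrand hβ (by linarith) hl)
    ((continuousOn_gIntegrand β (ν + 1) l).neg.aestronglyMeasurable measurableSet_Ioi)
    hbound ((integrableOn_rpow_mul_exp_neg_mul (by linarith) (by linarith)).const_mul _) hdiff
  simpa only [G_eq_integral_gIntegrand, integral_neg] using hderiv.2
end

section
/- Fix α ∈ [0,1), r ≥ 0 and η > 0. Let u : ℝ → ℝ be differentiable and let f : (0,∞) × ℝ → ℝ be continuously differentiable. Assume: (i) ∂_τ u(τ) = 1 − ∫₀^∞ x^α f(x,τ) dx for all τ; (ii) ∂_τ f(x,τ) + ∂_x(x^α f(x,τ)) = −η x^r f(x,τ) for all x > 0 and τ; (iii) x^α f(x,τ) → e^{u(τ)} as x → 0⁺ and x^{1+α} f(x,τ) → 0 as x → ∞, for each τ; (iv) for each τ, the functions x ↦ x f(x,τ), x ↦ x^α f(x,τ) and x ↦ x^{r+1} f(x,τ) are integrable on (0,∞), and x ↦ x·∂_τ f(x,τ) is dominated, locally uniformly in τ, by an integrable function of x. Then the total mass τ ↦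 u(τ) + ∫₀^∞ x f(x,τ) dx is differentiable, and its derivative equals 1 − η ∫₀^∞ x^{r+1} f(x,τ) dx. -/
open MeasureTheory Set Filter Topology

/-!
Differentiating under the integral sign (justified by the domination hypothesis) gives
`d/dτ ∫ x f = ∫ x ∂_τ f`. By the transport equation, `x ∂_τ f = -x ∂_x(x^α f) - η x^{r+1} f`,
and integrating `x ∂_x(x^α f)` by parts on `(0, ∞)` yields `-∫ x^α f`: the boundary term
`x · x^α f` vanishes at `0` because `x^α f` has a finite limit there, and at `∞` by the decay
assumption. Adding `u' = 1 - ∫ x^α f`, the nucleation flux cancels and only the removal term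
`-η ∫ x^{r+1} f` remains.
-/

section

variable {f : ℝ → ℝ → ℝ} {U : Set ℝ}

theorem differentiableAt_left_of_contDiffOn
    (hf : ContDiffOn ℝ 1 (fun p : ℝ × ℝ => f p.1 p.2) (U ×ˢ univ)) (hU : IsOpen U)
    {x : ℝ} (hx : x ∈ U) (τ : ℝ) : DifferentiableAt ℝ (fun x' => f x' τ) x :=
  ((hf.contDiffAt ((hU.prod isOpen_univ).mem_nhds ⟨hx, trivial⟩)).differentiableAt
    one_ne_zero).comp x (differentiableAt_id.prodMk (differentiableAt_const τ))

theorem hasDerivAt_right_of_contDiffOn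
    (hf : ContDiffOn ℝ 1 (fun p : ℝ × ℝ => f p.1 p.2) (U ×ˢ univ)) (hU : IsOpen U)
    {x : ℝ} (hx : x ∈ U) (τ : ℝ) :
    HasDerivAt (fun τ' => f x τ') (fderiv ℝ (fun p : ℝ × ℝ => f p.1 p.2) (x, τ) (0, 1)) τ :=
  ((hf.contDiffAt ((hU.prod isOpen_univ).mem_nhds ⟨hx, trivial⟩)).differentiableAt
    one_ne_zero).hasFDerivAt.comp_hasDerivAt τ
    ((hasDerivAt_const τ x).prodMk (hasDerivAt_id τ))

theorem continuousOn_deriv_right_of_contDiffOn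
    (hf : ContDiffOn ℝ 1 (fun p : ℝ × ℝ => f p.1 p.2) (U ×ˢ univ)) (hU : IsOpen U) (τ : ℝ) :
    ContinuousOn (fun x => deriv (fun τ' => f x τ') τ) U := by
  have hfderiv : ContinuousOn (fun x => fderiv ℝ (fun p : ℝ × ℝ => f p.1 p.2) (x, τ)) U :=
    (hf.continuousOn_fderiv_of_isOpen (hU.prod isOpen_univ) le_rfl).comp
      (continuous_id.prodMk continuous_const).continuousOn fun x hx => ⟨hx, trivial⟩
  exact (hfderiv.clm_apply continuousOn_const).congr fun x hx =>
    (hasDerivAt_right_of_contDiffOn hf hU hx τ).deriv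

theorem hasDerivAt_setIntegral_of_contDiffOn {w g : ℝ → ℝ} {τ₀ ε : ℝ}
    (hf : ContDiffOn ℝ 1 (fun p : ℝ × ℝ => f p.1 p.2) (U ×ˢ univ)) (hU : IsOpen U)
    (hw : ContinuousOn w U) (hint : IntegrableOn (fun x => w x * f x τ₀) U)
    (hg : IntegrableOn g U) (hε : 0 < ε)
    (hbound : ∀ τ, |τ - τ₀| < ε → ∀ x ∈ U, |w x * deriv (fun τ' => f x τ') τ| ≤ g x) :
    IntegrableOn (fun x => w x * deriv (fun τ' => f x τ') τ₀) U ∧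
      HasDerivAt (fun τ => ∫ x in U, w x * f x τ)
        (∫ x in U, w x * deriv (fun τ' => f x τ') τ₀) τ₀ := by
  have hslice : ∀ τ, ContinuousOn (fun x => f x τ) U := fun τ =>
    hf.continuousOn.comp (continuous_id.prodMk continuous_const).continuousOn
      fun x hx => ⟨hx, trivial⟩
  refine hasDerivAt_integral_of_dominated_loc_of_deriv_le (F := fun τ x => w x * f x τ)
    (F' := fun τ x => w x * deriv (fun τ' => f x τ') τ) (Metric.ball_mem_nhds τ₀ hε)
    (Eventually.of_forall fun τ => (hw.mul (hslice τ)).aestronglyMeasurable hU.measurableSet)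
    hint ((hw.mul (continuousOn_deriv_right_of_contDiffOn hf hU τ₀)).aestronglyMeasurable
      hU.measurableSet) ?_ hg ?_
  · filter_upwards [ae_restrict_mem hU.measurableSet] with x hx τ hτ
    exact hbound τ (by simpa [Real.dist_eq] using hτ) x hx
  · filter_upwards [ae_restrict_mem hU.measurableSet] with x hx τ _
    exact (hasDerivAt_right_of_contDiffOn hf hU hx τ).differentiableAt.hasDerivAt.const_mul
      (w x)

end

theorem integral_mul_deriv_right_eq {f : ℝ → ℝ → ℝ} {α r η L τ : ℝ}
    (hf : ContDiffOn ℝ 1 (fun p : ℝ × ℝ => f p.1 p.2) (Ioi 0 ×ˢ univ))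
    (hPDE : ∀ x : ℝ, 0 < x →
      deriv (fun τ' => f x τ') τ + deriv (fun x' => x' ^ α * f x' τ) x = -η * x ^ r * f x τ)
    (hBC0 : Tendsto (fun x : ℝ => x ^ α * f x τ) (𝓝[>] 0) (𝓝 L))
    (hBCinf : Tendsto (fun x : ℝ => x ^ (1 + α) * f x τ) atTop (𝓝 0))
    (hflux : IntegrableOn (fun x : ℝ => x ^ α * f x τ) (Ioi 0))
    (hremoval : IntegrableOn (fun x : ℝ => x ^ (r + 1) * f x τ) (Ioi 0))
    (hint : IntegrableOn (fun x => x * deriv (fun τ' => f x τ') τ) (Ioi 0)) :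
    ∫ x in Ioi 0, x * deriv (fun τ' => f x τ') τ
      = (∫ x in Ioi 0, x ^ α * f x τ) - η * ∫ x in Ioi 0, x ^ (r + 1) * f x τ := by
  set h : ℝ → ℝ := fun x => x ^ α * f x τ
  have hh : ∀ x ∈ Ioi (0 : ℝ), HasDerivAt h (deriv h x) x := fun x hx =>
    (((Real.hasDerivAt_rpow_const (Or.inl (ne_of_gt hx))).differentiableAt).mul
      (differentiableAt_left_of_contDiffOn hf isOpen_Ioi hx τ)).hasDerivAt
  have htransport : EqOn (fun x => x * deriv h x)
      (fun x => -(η * (x ^ (r + 1) * f x τ)) - x * deriv (fun τ' => f x τ') τ) (Ioi 0) := by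
    intro x hx
    simp only [Real.rpow_add hx, Real.rpow_one, eq_sub_of_add_eq' (hPDE x hx)]
    ring
  have hremoval' : IntegrableOn (fun x => -(η * (x ^ (r + 1) * f x τ))) (Ioi 0) :=
    (hremoval.const_mul η).neg
  have htransport_int : IntegrableOn (fun x => x * deriv h x) (Ioi 0) :=
    IntegrableOn.congr_fun (hremoval'.sub hint) htransport.symm measurableSet_Ioi
  have hparts : ∫ x in Ioi 0, x * deriv h x = 0 - 0 - ∫ x in Ioi 0, 1 * h x :=
    integral_Ioi_mul_deriv_eq_deriv_mul (u := fun x => x) (u' := fun _ => 1)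
      (fun x _ => hasDerivAt_id x) hh htransport_int (by simpa [Pi.mul_def] using hflux)
      (by simpa [Pi.mul_def] using (tendsto_nhdsWithin_of_tendsto_nhds tendsto_id).mul hBC0)
      (hBCinf.congr' <| (eventually_gt_atTop 0).mono fun x hx => by
        simp [h, Real.rpow_add hx, mul_assoc])
  rw [setIntegral_congr_fun measurableSet_Ioi htransport, integral_sub hremoval' hint,
    integral_neg, integral_const_mul] at hparts
  simp only [one_mul, zero_sub] at hparts
  linarith

theorem stmt15_general (α r η : ℝ)
    (u : ℝ → ℝ) (f : ℝ → ℝ → ℝ)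
    (hf : ContDiffOn ℝ 1 (fun p : ℝ × ℝ => f p.1 p.2) (Set.Ioi 0 ×ˢ Set.univ))
    (hmono : ∀ τ : ℝ,
      HasDerivAt u (1 - ∫ x in Set.Ioi (0 : ℝ), x ^ α * f x τ) τ)
    (hPDE : ∀ x : ℝ, 0 < x → ∀ τ : ℝ,
      deriv (fun τ' => f x τ') τ + deriv (fun x' => x' ^ α * f x' τ) x
        = -η * x ^ r * f x τ)
    (hBC0 : ∀ τ : ℝ, Filter.Tendsto (fun x : ℝ => x ^ α * f x τ)
      (nhdsWithin 0 (Set.Ioi 0)) (nhds (Real.exp (u τ))))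
    (hBCinf : ∀ τ : ℝ, Filter.Tendsto (fun x : ℝ => x ^ (1 + α) * f x τ)
      Filter.atTop (nhds 0))
    (hint1 : ∀ τ : ℝ,
      MeasureTheory.IntegrableOn (fun x : ℝ => x * f x τ) (Set.Ioi 0))
    (hint2 : ∀ τ : ℝ,
      MeasureTheory.IntegrableOn (fun x : ℝ => x ^ α * f x τ) (Set.Ioi 0))
    (hint3 : ∀ τ : ℝ,
      MeasureTheory.IntegrableOn (fun x : ℝ => x ^ (r + 1) * f x τ) (Set.Ioi 0))
    (hdom : ∀ τ₀ : ℝ, ∃ g : ℝ → ℝ, MeasureTheory.IntegrableOn g (Set.Ioi 0) ∧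
      ∃ ε : ℝ, 0 < ε ∧ ∀ τ : ℝ, |τ - τ₀| < ε → ∀ x ∈ Set.Ioi (0 : ℝ),
        |x * deriv (fun τ' => f x τ') τ| ≤ g x) :
    ∀ τ : ℝ,
      HasDerivAt (fun τ' => u τ' + ∫ x in Set.Ioi (0 : ℝ), x * f x τ')
        (1 - η * ∫ x in Set.Ioi (0 : ℝ), x ^ (r + 1) * f x τ) τ := by
  intro τ
  obtain ⟨g, hg, ε, hε, hbound⟩ := hdom τ
  obtain ⟨hint, hmass⟩ := hasDerivAt_setIntegral_of_contDiffOn (w := fun x => x) hf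
    isOpen_Ioi continuousOn_id (hint1 τ) hg hε hbound
  have htransport := integral_mul_deriv_right_eq hf (fun x hx => hPDE x hx τ) (hBC0 τ)
    (hBCinf τ) (hint2 τ) (hint3 τ) hint
  exact ((hmono τ).add hmass).congr_deriv (by rw [htransport]; ring)

/-- Mass balance law for the Becker–Döring bubblelator limit model: under the stated
regularity, boundary, decay, integrability and domination assumptions, the total mass
`τ ↦ u(τ) + ∫₀^∞ x f(x,τ) dx` is differentiable with derivative
`1 − η ∫₀^∞ x^{r+1} f(x,τ) dx`. -/
theorem stmt15 (α r η : ℝ) (hα0 : 0 ≤ α) (hα1 : α < 1) (hr : 0 ≤ r) (hη : 0 < η)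
    (u : ℝ → ℝ) (f : ℝ → ℝ → ℝ)
    (hu : Differentiable ℝ u)
    (hf : ContDiffOn ℝ 1 (fun p : ℝ × ℝ => f p.1 p.2) (Set.Ioi 0 ×ˢ Set.univ))
    (hmono : ∀ τ : ℝ,
      HasDerivAt u (1 - ∫ x in Set.Ioi (0 : ℝ), x ^ α * f x τ) τ)
    (hPDE : ∀ x : ℝ, 0 < x → ∀ τ : ℝ,
      deriv (fun τ' => f x τ') τ + deriv (fun x' => x' ^ α * f x' τ) x
        = -η * x ^ r * f x τ)
    (hBC0 : ∀ τ : ℝ, Filter.Tendsto (fun x : ℝ => x ^ α * f x τ)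
      (nhdsWithin 0 (Set.Ioi 0)) (nhds (Real.exp (u τ))))
    (hBCinf : ∀ τ : ℝ, Filter.Tendsto (fun x : ℝ => x ^ (1 + α) * f x τ)
      Filter.atTop (nhds 0))
    (hint1 : ∀ τ : ℝ,
      MeasureTheory.IntegrableOn (fun x : ℝ => x * f x τ) (Set.Ioi 0))
    (hint2 : ∀ τ : ℝ,
      MeasureTheory.IntegrableOn (fun x : ℝ => x ^ α * f x τ) (Set.Ioi 0))
    (hint3 : ∀ τ : ℝ,
      MeasureTheory.IntegrableOn (fun x : ℝ => x ^ (r + 1) * f x τ) (Set.Ioi 0))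
    (hdom : ∀ τ₀ : ℝ, ∃ g : ℝ → ℝ, MeasureTheory.IntegrableOn g (Set.Ioi 0) ∧
      ∃ ε : ℝ, 0 < ε ∧ ∀ τ : ℝ, |τ - τ₀| < ε → ∀ x ∈ Set.Ioi (0 : ℝ),
        |x * deriv (fun τ' => f x τ') τ| ≤ g x) :
    ∀ τ : ℝ,
      HasDerivAt (fun τ' => u τ' + ∫ x in Set.Ioi (0 : ℝ), x * f x τ')
        (1 - η * ∫ x in Set.Ioi (0 : ℝ), x ^ (r + 1) * f x τ) τ :=
  stmt15_general α r η u f hf hmono hPDE hBC0 hBCinf hint1 hint2 hint3 hdom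
end

section
/- Fix α ∈ [0,1), γ ∈ (0,1), q > 0 and n̄₁ > 1, and let N_k = N_k(n̄₁) be the constant-flux steady state. Then the sequence k ↦ a_k N_k is nonincreasing in k. Consequently N_k ≤ n̄₁ for all k ≥ 1, and if α > 0 then N_k → 0 as k → ∞. -/
/-!
Write `c_l = 1/(a_l Q_l n̄₁^{l+1})` and `S_k = ∑_{l ≥ k} c_l`. Since `c_k · a_k Q_k n̄₁^k = 1/n̄₁`,
the steady state satisfies `a_k N_k = J S_k / (n̄₁ c_k)`, and `a_1 N_1 = n̄₁` because `J = 1/S_1`.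
The ratio `c_{l+1}/c_l = (1 + q (l+1)^{-γ})/n̄₁` is nonincreasing in `l` and tends to `1/n̄₁ < 1`;
the limit makes the series converge, and the monotonicity makes `S_k / c_k = ∑_i c_{k+i}/c_k`
nonincreasing termwise. Hence `a_k N_k ≤ a_1 N_1 = n̄₁`, and `N_k ≤ n̄₁ k^{-α}` since `a_k = k^α`.
-/

open Filter Topology

/-- Attachment rate `a_k = k^α`. -/
noncomputable def a (α : ℝ) (k : ℕ) : ℝ := (k : ℝ) ^ α

/-- Detachment rate `b_k = k^α (1 + q k^{−γ})`. -/
noncomputable def b (α γ q : ℝ) (k : ℕ) : ℝ := (k : ℝ) ^ α * (1 + q * (k : ℝ) ^ (-γ))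

/-- Equilibrium coefficients `Q_1 = 1`, `Q_k = ∏_{l=1}^{k−1} a_l / b_{l+1}`. -/
noncomputable def Q (α γ q : ℝ) (k : ℕ) : ℝ :=
  ∏ l ∈ Finset.Icc 1 (k - 1), a α l / b α γ q (l + 1)

/-- Summand `c_l = 1/(a_l Q_l n̄₁^{l+1})` (used for `l ≥ 1`). -/
noncomputable def c (α γ q n₁ : ℝ) (l : ℕ) : ℝ :=
  1 / (a α l * Q α γ q l * n₁ ^ (l + 1))

/-- Constant flux `J(n̄₁) = (∑_{l=1}^∞ 1/(a_l Q_l n̄₁^{l+1}))⁻¹`. -/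
noncomputable def J (α γ q n₁ : ℝ) : ℝ := (∑' i : ℕ, c α γ q n₁ (1 + i))⁻¹

/-- Constant-flux steady state
`N_k(n̄₁) = J(n̄₁) Q_k n̄₁^k ∑_{l=k}^∞ 1/(a_l Q_l n̄₁^{l+1})`. -/
noncomputable def N (α γ q n₁ : ℝ) (k : ℕ) : ℝ :=
  J α γ q n₁ * Q α γ q k * n₁ ^ k * ∑' i : ℕ, c α γ q n₁ (k + i)

section RatioRecursion

variable {u ρ : ℕ → ℝ}

theorem summable_of_succ_eq_mul_of_tendsto {r : ℝ} (hrec : ∀ᶠ l in atTop, u (l + 1) = u l * ρ l)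
    (hρ : Tendsto ρ atTop (𝓝 r)) (hr : |r| < 1) : Summable u := by
  have hbound : ∀ᶠ l in atTop, ‖ρ l‖ < (|r| + 1) / 2 :=
    hρ.norm.eventually_lt_const (by rw [Real.norm_eq_abs]; linarith)
  refine summable_of_ratio_norm_eventually_le (r := (|r| + 1) / 2) (by linarith) ?_
  filter_upwards [hrec, hbound] with l hl hlρ
  rw [hl, norm_mul, mul_comm]
  exact mul_le_mul_of_nonneg_right hlρ.le (norm_nonneg _)

variable {k : ℕ} (hu : ∀ l, 0 ≤ u l) (hρ : Antitone ρ) (hρ0 : ∀ l, 0 ≤ ρ l)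
  (hrec : ∀ l, k ≤ l → u (l + 1) = u l * ρ l)
include hu hρ hρ0 hrec

/-- `u_{k+1+i} / u_{k+1} ≤ u_{k+i} / u_k`, written without division. -/
theorem succ_add_mul_le_of_antitone_ratio (i : ℕ) :
    u (k + 1 + i) * u k ≤ u (k + i) * u (k + 1) := by
  induction i with
  | zero => rw [add_zero, add_zero, mul_comm]
  | succ i ih =>
    rw [← add_assoc, ← add_assoc, hrec _ (by omega), hrec (k + i) (by omega)]
    calc u (k + 1 + i) * ρ (k + 1 + i) * u k
        ≤ u (k + 1 + i) * u k * ρ (k + i) := by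
          rw [mul_right_comm]
          exact mul_le_mul_of_nonneg_left (hρ (by omega)) (mul_nonneg (hu _) (hu _))
      _ ≤ u (k + i) * u (k + 1) * ρ (k + i) := mul_le_mul_of_nonneg_right ih (hρ0 _)
      _ = u (k + i) * ρ (k + i) * u (k + 1) := by ring

theorem tsum_succ_add_mul_le_of_antitone_ratio (hsum : Summable u) :
    (∑' i, u (k + 1 + i)) * u k ≤ (∑' i, u (k + i)) * u (k + 1) := by
  have hshift (m : ℕ) : Summable fun i ↦ u (m + i) := by
    simpa only [add_comm] using (summable_nat_add_iff m).2 hsum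
  rw [← tsum_mul_right, ← tsum_mul_right]
  exact ((hshift _).mul_right _).tsum_le_tsum
    (succ_add_mul_le_of_antitone_ratio hu hρ hρ0 hrec) ((hshift _).mul_right _)

end RatioRecursion

noncomputable def cRatio (γ q n₁ : ℝ) (l : ℕ) : ℝ := (1 + q * ((l : ℝ) + 1) ^ (-γ)) / n₁

section SteadyState

variable {α γ q n₁ : ℝ}

theorem a_pos {k : ℕ} (hk : 1 ≤ k) : 0 < a α k :=
  Real.rpow_pos_of_pos (by exact_mod_cast hk) _

theorem one_le_a (hα : 0 ≤ α) {k : ℕ} (hk : 1 ≤ k) : 1 ≤ a α k :=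
  Real.one_le_rpow (by exact_mod_cast hk) hα

theorem b_pos (hq : 0 ≤ q) {k : ℕ} (hk : 1 ≤ k) : 0 < b α γ q k := by
  have hk' : (0 : ℝ) < k := by exact_mod_cast hk
  have : 0 < (k : ℝ) ^ (-γ) := Real.rpow_pos_of_pos hk' _
  exact mul_pos (Real.rpow_pos_of_pos hk' _) (by positivity)

theorem Q_pos (hq : 0 ≤ q) (k : ℕ) : 0 < Q α γ q k :=
  Finset.prod_pos fun l hl ↦
    div_pos (a_pos (Finset.mem_Icc.1 hl).1) (b_pos hq (by omega))

theorem Q_one : Q α γ q 1 = 1 := by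
  simp [Q]

theorem Q_succ {k : ℕ} (hk : 1 ≤ k) :
    Q α γ q (k + 1) = Q α γ q k * (a α k / b α γ q (k + 1)) := by
  obtain ⟨m, rfl⟩ := Nat.exists_eq_add_of_le' hk
  simp only [Q, Nat.add_sub_cancel]
  exact Finset.prod_Icc_succ_top (by omega) _

theorem c_nonneg (hq : 0 ≤ q) (hn : 0 ≤ n₁) (k : ℕ) : 0 ≤ c α γ q n₁ k := by
  have : 0 ≤ a α k := Real.rpow_nonneg (Nat.cast_nonneg k) _
  have := Q_pos (α := α) (γ := γ) hq k
  unfold c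
  positivity

theorem c_pos (hq : 0 ≤ q) (hn : 0 < n₁) {k : ℕ} (hk : 1 ≤ k) : 0 < c α γ q n₁ k := by
  have := a_pos (α := α) hk
  have := Q_pos (α := α) (γ := γ) hq k
  unfold c
  positivity

theorem c_succ (hq : 0 ≤ q) (hn : 0 < n₁) {k : ℕ} (hk : 1 ≤ k) :
    c α γ q n₁ (k + 1) = c α γ q n₁ k * cRatio γ q n₁ k := by
  have hb : b α γ q (k + 1) = a α (k + 1) * (1 + q * ((k : ℝ) + 1) ^ (-γ)) := by
    simp only [a, b, Nat.cast_succ]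
  have := a_pos (α := α) hk
  have := a_pos (α := α) (k := k + 1) (by omega)
  have := b_pos (α := α) (γ := γ) hq (k := k + 1) (by omega)
  have := Q_pos (α := α) (γ := γ) hq k
  rw [c, c, cRatio, Q_succ hk, hb]
  field_simp
  ring

theorem cRatio_nonneg (hq : 0 ≤ q) (hn : 0 ≤ n₁) (l : ℕ) : 0 ≤ cRatio γ q n₁ l := by
  have : 0 ≤ ((l : ℝ) + 1) ^ (-γ) := Real.rpow_nonneg (by positivity) _
  unfold cRatio
  positivity

theorem cRatio_antitone (hγ : 0 ≤ γ) (hq : 0 ≤ q) (hn : 0 ≤ n₁) : Antitone (cRatio γ q n₁) := by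
  intro l m hlm
  have hl : (0 : ℝ) < (l : ℝ) + 1 := by positivity
  have hle : (l : ℝ) + 1 ≤ (m : ℝ) + 1 := by gcongr
  have := Real.rpow_le_rpow_of_nonpos hl hle (neg_nonpos.2 hγ)
  unfold cRatio
  gcongr

theorem tendsto_cRatio (hγ : 0 < γ) :
    Tendsto (cRatio γ q n₁) atTop (𝓝 (1 / n₁)) := by
  have h : Tendsto (fun l : ℕ ↦ ((l : ℝ) + 1) ^ (-γ)) atTop (𝓝 0) :=
    (tendsto_rpow_neg_atTop hγ).comp (tendsto_natCast_atTop_atTop.atTop_add tendsto_const_nhds)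
  unfold cRatio
  simpa using ((h.const_mul q).const_add 1).div_const n₁

theorem summable_c (hγ : 0 < γ) (hq : 0 ≤ q) (hn : 1 < n₁) : Summable (c α γ q n₁) := by
  refine summable_of_succ_eq_mul_of_tendsto ?_ (tendsto_cRatio (q := q) (n₁ := n₁) hγ) ?_
  · filter_upwards [eventually_ge_atTop 1] with l hl using c_succ hq (by linarith) hl
  · rw [abs_of_pos (by positivity), div_lt_one (by linarith)]
    exact hn

theorem J_nonneg (hq : 0 ≤ q) (hn : 0 ≤ n₁) : 0 ≤ J α γ q n₁ :=
  inv_nonneg.2 (tsum_nonneg fun _ ↦ c_nonneg hq hn _)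

theorem N_nonneg (hq : 0 ≤ q) (hn : 0 ≤ n₁) (k : ℕ) : 0 ≤ N α γ q n₁ k := by
  have := J_nonneg (α := α) (γ := γ) hq hn
  have := Q_pos (α := α) (γ := γ) hq k
  have : 0 ≤ ∑' i, c α γ q n₁ (k + i) := tsum_nonneg fun i ↦ c_nonneg hq hn _
  unfold N
  positivity

theorem N_one (hγ : 0 < γ) (hq : 0 ≤ q) (hn : 1 < n₁) : N α γ q n₁ 1 = n₁ := by
  have hS : 0 < ∑' i, c α γ q n₁ (1 + i) := by
    simp_rw [add_comm 1]
    exact ((summable_nat_add_iff 1).2 (summable_c hγ hq hn)).tsum_pos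
      (fun _ ↦ c_nonneg hq (by linarith) _) 0 (by simpa using c_pos hq (by linarith) le_rfl)
  rw [N, J, Q_one, pow_one]
  field_simp

theorem a_mul_N (hq : 0 ≤ q) (hn : 0 < n₁) {k : ℕ} (hk : 1 ≤ k) :
    a α k * N α γ q n₁ k = J α γ q n₁ * (∑' i, c α γ q n₁ (k + i)) / (n₁ * c α γ q n₁ k) := by
  have := a_pos (α := α) hk
  have := Q_pos (α := α) (γ := γ) hq k
  rw [N, c]
  field_simp
  ring

theorem a_mul_N_succ_le (hγ : 0 < γ) (hq : 0 ≤ q) (hn : 1 < n₁) {k : ℕ} (hk : 1 ≤ k) :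
    a α (k + 1) * N α γ q n₁ (k + 1) ≤ a α k * N α γ q n₁ k := by
  have hn0 : 0 < n₁ := by linarith
  have hck := c_pos (α := α) (γ := γ) hq hn0 hk
  have hck1 := c_pos (α := α) (γ := γ) hq hn0 (k := k + 1) (by omega)
  have htail := tsum_succ_add_mul_le_of_antitone_ratio (c_nonneg hq hn0.le)
    (cRatio_antitone hγ.le hq hn0.le) (cRatio_nonneg hq hn0.le)
    (fun l hl ↦ c_succ hq hn0 (hk.trans hl)) (summable_c (α := α) hγ hq hn)
  rw [a_mul_N hq hn0 hk, a_mul_N hq hn0 (by omega), div_le_div_iff₀ (by positivity) (by positivity)]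
  have := J_nonneg (α := α) (γ := γ) hq hn0.le
  calc J α γ q n₁ * (∑' i, c α γ q n₁ (k + 1 + i)) * (n₁ * c α γ q n₁ k)
      = J α γ q n₁ * n₁ * ((∑' i, c α γ q n₁ (k + 1 + i)) * c α γ q n₁ k) := by ring
    _ ≤ J α γ q n₁ * n₁ * ((∑' i, c α γ q n₁ (k + i)) * c α γ q n₁ (k + 1)) := by gcongr
    _ = J α γ q n₁ * (∑' i, c α γ q n₁ (k + i)) * (n₁ * c α γ q n₁ (k + 1)) := by ring

theorem a_mul_N_le (hγ : 0 < γ) (hq : 0 ≤ q) (hn : 1 < n₁) {k : ℕ} (hk : 1 ≤ k) :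
    a α k * N α γ q n₁ k ≤ n₁ := by
  induction k, hk using Nat.le_induction with
  | base => rw [N_one hγ hq hn, a, Nat.cast_one, Real.one_rpow, one_mul]
  | succ k hk ih => exact (a_mul_N_succ_le hγ hq hn hk).trans ih

end SteadyState

theorem stmt17_general (α γ q n₁ : ℝ) (hα0 : 0 ≤ α)
    (hγ0 : 0 < γ) (hq : 0 < q) (hn₁ : 1 < n₁) :
    (∀ k : ℕ, 1 ≤ k →
        a α (k + 1) * N α γ q n₁ (k + 1) ≤ a α k * N α γ q n₁ k) ∧
      (∀ k : ℕ, 1 ≤ k → N α γ q n₁ k ≤ n₁) ∧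
      (0 < α → Filter.Tendsto (N α γ q n₁) Filter.atTop (nhds 0)) := by
  have hN0 := N_nonneg (α := α) (γ := γ) hq.le (n₁ := n₁) (by linarith)
  refine ⟨fun k hk ↦ a_mul_N_succ_le hγ0 hq.le hn₁ hk,
    fun k hk ↦ (le_mul_of_one_le_left (hN0 k) (one_le_a hα0 hk)).trans
      (a_mul_N_le hγ0 hq.le hn₁ hk), fun hα ↦ ?_⟩
  have hdecay : Tendsto (fun k : ℕ ↦ n₁ * (k : ℝ) ^ (-α)) atTop (𝓝 0) := by
    simpa using ((tendsto_rpow_neg_atTop hα).comp tendsto_natCast_atTop_atTop).const_mul n₁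
  refine squeeze_zero' (Eventually.of_forall hN0) ?_ hdecay
  filter_upwards [eventually_ge_atTop 1] with k hk
  rw [Real.rpow_neg (Nat.cast_nonneg k), ← div_eq_mul_inv]
  exact (le_div_iff₀ (a_pos hk)).2 ((mul_comm _ _).trans_le (a_mul_N_le hγ0 hq.le hn₁ hk))

/-- The constant-flux steady state satisfies: `k ↦ a_k N_k` is nonincreasing;
hence `N_k ≤ n̄₁` for all `k ≥ 1`, and `N_k → 0` as `k → ∞` when `α > 0`. -/
theorem stmt17 (α γ q n₁ : ℝ) (hα0 : 0 ≤ α) (hα1 : α < 1)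
    (hγ0 : 0 < γ) (hγ1 : γ < 1) (hq : 0 < q) (hn₁ : 1 < n₁) :
    (∀ k : ℕ, 1 ≤ k →
        a α (k + 1) * N α γ q n₁ (k + 1) ≤ a α k * N α γ q n₁ k) ∧
      (∀ k : ℕ, 1 ≤ k → N α γ q n₁ k ≤ n₁) ∧
      (0 < α → Filter.Tendsto (N α γ q n₁) Filter.atTop (nhds 0)) :=
  stmt17_general α γ q n₁ hα0 hγ0 hq hn₁
end
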